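/- Let n ≥ 1, let U ⊆ ℝⁿ be open, and let b : ℝⁿ → ℝ be a smooth (C^∞) function such that ‖∇b(x)‖ = 1 for every x ∈ U. Define functions g_k on U inductively by g₀ = Δb and g_{k+1}(x) = ⟨∇g_k(x), ∇b(x)⟩. Then for every natural number J ≥ 0 and every x ∈ U, g_J(x) = (−1)^J · J! · tr(H(x)^{J+1}), where H(x) is the Hessian matrix of b at x. -/

import Mathlib

/-- The `i`-th partial derivative `∂ᵢ b` at `x`. -/
noncomputable def pd {n : ℕ} (b : (Fin n → ℝ) → ℝ) (i : Fin n) (x : Fin n → ℝ) : ℝ :=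
  fderiv ℝ b x (Pi.single i 1)

/-- The Hessian matrix of `b` at `x`, with entries `∂ᵢ∂ⱼ b (x)`. -/
noncomputable def hess {n : ℕ} (b : (Fin n → ℝ) → ℝ) (x : Fin n → ℝ) :
    Matrix (Fin n) (Fin n) ℝ :=
  Matrix.of fun i j => pd (pd b j) i x

/-- Iterated derivatives of the mean curvature `Δb = tr H` along the unit normal
direction `∇b`:  `g₀ = Δb` and `g_{k+1} = ⟨∇g_k, ∇b⟩`. -/
noncomputable def normalIter {n : ℕ} (b : (Fin n → ℝ) → ℝ) : ℕ → (Fin n → ℝ) → ℝ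
  | 0 => fun x => Matrix.trace (hess b x)
  | J + 1 => fun x => ∑ i, pd (normalIter b J) i x * pd b i x

/-!
Differentiating the eikonal equation `∑ₖ (∂ₖb)² = 1` gives `H ∇b = 0`; differentiating that once
more and using the symmetry of third derivatives gives the Riccati equation `∂_ν H = -H²` along
`ν = ∇b`. By the Leibniz rule each of the `m` terms of `∂_ν (H^m)` is then `-H^{m+1}`, so
`∂_ν tr (H^m) = -m tr (H^{m+1})`, and the formula follows by induction on `J`.
-/

open scoped Topology

section PartialDerivatives

variable {n : ℕ} {f g : (Fin n → ℝ) → ℝ} {x : Fin n → ℝ}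

theorem ContDiff.pd {k m : WithTop ℕ∞} (hf : ContDiff ℝ k f) (hmk : m + 1 ≤ k) (i : Fin n) :
    ContDiff ℝ m (pd f i) :=
  (hf.fderiv_right hmk).clm_apply contDiff_const

theorem differentiableAt_pd (hf : ContDiff ℝ 2 f) (i : Fin n) (x : Fin n → ℝ) :
    DifferentiableAt ℝ (pd f i) x :=
  (hf.pd (m := 1) le_rfl i).differentiable one_ne_zero x

theorem pd_comm (hf : ContDiff ℝ 2 f) (i j : Fin n) (x : Fin n → ℝ) :
    pd (pd f i) j x = pd (pd f j) i x := by
  have hf' : ContDiff ℝ 1 (fderiv ℝ f) := hf.fderiv_right (by norm_num)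
  have hsymm : IsSymmSndFDerivAt ℝ f x := hf.contDiffAt.isSymmSndFDerivAt (by simp)
  have hpd (v w : Fin n → ℝ) :
      fderiv ℝ (fun y => fderiv ℝ f y v) x w = fderiv ℝ (fderiv ℝ f) x w v := by
    rw [fderiv_clm_apply (hf'.differentiable one_ne_zero x) (differentiableAt_const v)]
    simp
  unfold pd
  rw [hpd, hpd, hsymm.eq]

theorem sum_pd_mul_eq_fderiv (f : (Fin n → ℝ) → ℝ) (x w : Fin n → ℝ) :
    ∑ i, pd f i x * w i = fderiv ℝ f x w := by
  conv_rhs => rw [← Finset.univ_sum_single w, map_sum]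
  refine Finset.sum_congr rfl fun i _ => ?_
  rw [pd, mul_comm, ← smul_eq_mul, ← map_smul, ← Pi.single_smul', smul_eq_mul, mul_one]

theorem pd_fun_mul (hf : DifferentiableAt ℝ f x) (hg : DifferentiableAt ℝ g x) (i : Fin n) :
    pd (fun y => f y * g y) i x = pd f i x * g x + f x * pd g i x := by
  simp only [pd, fderiv_fun_mul hf hg, add_apply, smul_apply, smul_eq_mul]
  ring

theorem pd_fun_sum {ι : Type*} (s : Finset ι) {F : ι → (Fin n → ℝ) → ℝ}
    (hF : ∀ j ∈ s, DifferentiableAt ℝ (F j) x) (i : Fin n) :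
    pd (fun y => ∑ j ∈ s, F j y) i x = ∑ j ∈ s, pd (F j) i x := by
  simp [pd, fderiv_fun_sum hF]

theorem pd_eq_zero_of_eventuallyEq_const {c : ℝ} (h : f =ᶠ[𝓝 x] fun _ => c) (i : Fin n) :
    pd f i x = 0 := by
  simp [pd, h.fderiv_eq]

theorem pd_pd_pd_comm (hf : ContDiff ℝ 3 f) (i j k : Fin n) (x : Fin n → ℝ) :
    pd (pd (pd f i) j) k x = pd (pd (pd f k) i) j x := by
  rw [pd_comm (hf.pd le_rfl i) j k x,
    show pd (pd f i) k = pd (pd f k) i from funext (pd_comm (hf.of_le (by norm_num)) i k)]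

end PartialDerivatives

theorem fderiv_pow_apply_of_fderiv_apply_eq_neg_sq {𝕜 E 𝔸 : Type*} [NontriviallyNormedField 𝕜]
    [NormedAddCommGroup E] [NormedSpace 𝕜 E] [NormedRing 𝔸] [NormedAlgebra 𝕜 𝔸]
    {F : E → 𝔸} {x v : E} (hF : DifferentiableAt 𝕜 F x) (hFv : fderiv 𝕜 F x v = -F x ^ 2)
    (m : ℕ) : fderiv 𝕜 (fun y => F y ^ m) x v = -(m • F x ^ (m + 1)) := by
  have hterm : ∀ i ∈ Finset.range m, F x ^ (m - 1 - i) * F x ^ 2 * F x ^ i = F x ^ (m + 1) := by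
    intro i hi
    rw [← pow_add, ← pow_add]
    congr 1
    have := Finset.mem_range.1 hi
    omega
  rw [fderiv_fun_pow' m hF]
  simp [hFv, Finset.sum_congr rfl hterm]

section MatrixCalculus

variable {𝕜 E ι : Type*} [NontriviallyNormedField 𝕜] [CompleteSpace 𝕜]
  [NormedAddCommGroup E] [NormedSpace 𝕜 E] [Fintype ι] [DecidableEq ι]

-- Any norm would do, since only derivatives enter; the `L^∞` operator norm makes square
-- matrices a normed algebra, so that the noncommutative power rule applies.
attribute [local instance] Matrix.linftyOpNormedRing Matrix.linftyOpNormedAlgebra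

theorem Matrix.differentiableAt_of {G : E → ι → ι → 𝕜} {x : E}
    (hG : ∀ i j, DifferentiableAt 𝕜 (fun y => G y i j) x) :
    DifferentiableAt 𝕜 (fun y => Matrix.of (G y)) x :=
  show DifferentiableAt 𝕜 ((Matrix.ofLinearEquiv 𝕜).toContinuousLinearEquiv ∘ G) x from
  (Matrix.ofLinearEquiv 𝕜).toContinuousLinearEquiv.comp_differentiableAt_iff.2 <|
    differentiableAt_pi.2 fun i => differentiableAt_pi.2 (hG i)

theorem Matrix.fderiv_of_apply {G : E → ι → ι → 𝕜} {x : E}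
    (hG : ∀ i j, DifferentiableAt 𝕜 (fun y => G y i j) x) (v : E) :
    fderiv 𝕜 (fun y => Matrix.of (G y)) x v =
      Matrix.of fun i j => fderiv 𝕜 (fun y => G y i j) x v := by
  have hGi (i : ι) : DifferentiableAt 𝕜 (fun y => G y i) x := differentiableAt_pi.2 (hG i)
  refine (congrArg (· v) ((Matrix.ofLinearEquiv 𝕜).toContinuousLinearEquiv.comp_fderiv
    (f := G) (x := x))).trans ?_
  ext i j
  simp [fderiv_pi hGi, fderiv_pi (hG i)]

theorem Matrix.fderiv_trace_apply {F : E → Matrix ι ι 𝕜} {x : E}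
    (hF : DifferentiableAt 𝕜 F x) (v : E) :
    fderiv 𝕜 (fun y => (F y).trace) x v = (fderiv 𝕜 F x v).trace :=
  let T : Matrix ι ι 𝕜 →L[𝕜] 𝕜 := (Matrix.traceLinearMap ι 𝕜 𝕜).toContinuousLinearMap
  congrArg (· v) (T.hasFDerivAt.comp x hF.hasFDerivAt).fderiv

end MatrixCalculus

open scoped Matrix

section Eikonal

variable {n : ℕ} {b : (Fin n → ℝ) → ℝ} {x : Fin n → ℝ}

attribute [local instance] Matrix.linftyOpNormedRing Matrix.linftyOpNormedAlgebra

noncomputable def grad (b : (Fin n → ℝ) → ℝ) (x : Fin n → ℝ) : Fin n → ℝ :=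
  fun i => pd b i x

theorem hess_mulVec_grad_eq_zero (hb : ContDiff ℝ 2 b)
    (heik : ∀ᶠ y in 𝓝 x, ∑ k, pd b k y ^ 2 = 1) : hess b x *ᵥ grad b x = 0 := by
  have hd (l : Fin n) : DifferentiableAt ℝ (pd b l) x := differentiableAt_pd hb l x
  ext k
  have hdiff : pd (fun y => ∑ l, pd b l y * pd b l y) k x = 0 :=
    pd_eq_zero_of_eventuallyEq_const (c := 1) (heik.mono fun y hy => by simpa [sq] using hy) k
  rw [pd_fun_sum (F := fun l y => pd b l y * pd b l y) _ (fun l _ => (hd l).mul (hd l))] at hdiff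
  simp only [pd_fun_mul (hd _) (hd _), mul_comm (pd (pd b _) k x), ← two_mul,
    ← Finset.mul_sum, mul_eq_zero, two_ne_zero, false_or] at hdiff
  simpa [Matrix.mulVec, dotProduct, hess, grad, mul_comm] using hdiff

theorem fderiv_hess_grad (hb : ContDiff ℝ 3 b) (heik : ∀ᶠ y in 𝓝 x, ∑ k, pd b k y ^ 2 = 1) :
    fderiv ℝ (hess b) x (grad b x) = -(hess b x ^ 2) := by
  have hb2 : ContDiff ℝ 2 b := hb.of_le (by norm_num)
  have hd (l : Fin n) : DifferentiableAt ℝ (pd b l) x := differentiableAt_pd hb2 l x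
  have hdd (i j : Fin n) : DifferentiableAt ℝ (pd (pd b j) i) x :=
    differentiableAt_pd (hb.pd le_rfl j) i x
  have hHν : ∀ᶠ y in 𝓝 x, hess b y *ᵥ grad b y = 0 :=
    heik.eventually_nhds.mono fun y hy => hess_mulVec_grad_eq_zero hb2 hy
  change fderiv ℝ (fun y => Matrix.of fun i j => pd (pd b j) i y) x (grad b x) = _
  rw [Matrix.fderiv_of_apply hdd]
  ext j k
  have hdiff : pd (fun y => ∑ l, pd (pd b l) k y * pd b l y) j x = 0 :=
    pd_eq_zero_of_eventuallyEq_const (c := 0) (hHν.mono fun y hy => congrFun hy k) j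
  rw [pd_fun_sum (F := fun l y => pd (pd b l) k y * pd b l y) _
    (fun l _ => (hdd k l).mul (hd l))] at hdiff
  simp only [pd_fun_mul (hdd _ _) (hd _), Finset.sum_add_distrib] at hdiff
  simp only [Matrix.of_apply, Matrix.neg_apply, sq, Matrix.mul_apply]
  rw [← sum_pd_mul_eq_fderiv]
  calc ∑ l, pd (pd (pd b k) j) l x * grad b x l
      = ∑ l, pd (pd (pd b l) k) j x * pd b l x := by simp only [grad, pd_pd_pd_comm hb k j]
    _ = -∑ l, pd (pd b l) k x * pd (pd b l) j x := by linarith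
    _ = -∑ l, hess b x j l * hess b x l k := by
      refine congrArg Neg.neg (Finset.sum_congr rfl fun l _ => ?_)
      rw [hess, Matrix.of_apply, Matrix.of_apply, pd_comm hb2 k l x, mul_comm]

theorem differentiableAt_hess (hb : ContDiff ℝ 3 b) : DifferentiableAt ℝ (hess b) x :=
  Matrix.differentiableAt_of fun i j => differentiableAt_pd (hb.pd le_rfl j) i x

theorem differentiableAt_trace_hess_pow (hb : ContDiff ℝ 3 b) (m : ℕ) :
    DifferentiableAt ℝ (fun y => (hess b y ^ m).trace) x :=
  ((Matrix.traceLinearMap (Fin n) ℝ ℝ).toContinuousLinearMap.differentiableAt).comp x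
    ((differentiableAt_hess hb).fun_pow m)

theorem fderiv_trace_hess_pow_grad (hb : ContDiff ℝ 3 b)
    (heik : ∀ᶠ y in 𝓝 x, ∑ k, pd b k y ^ 2 = 1) (m : ℕ) :
    fderiv ℝ (fun y => (hess b y ^ m).trace) x (grad b x) = -(m * (hess b x ^ (m + 1)).trace) := by
  have hpow := fderiv_pow_apply_of_fderiv_apply_eq_neg_sq (differentiableAt_hess hb)
    (fderiv_hess_grad hb heik) m
  rw [Matrix.fderiv_trace_apply ((differentiableAt_hess hb).fun_pow m)]
  -- `hpow` sees the additive structure of matrices through the normed ring instance, so `rw`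
  -- cannot match it syntactically.
  refine (congrArg Matrix.trace hpow).trans ?_
  rw [Matrix.trace_neg, Matrix.trace_smul, nsmul_eq_mul]

end Eikonal

theorem iterated_normal_deriv_mean_curvature_general {n : ℕ}
    (U : Set (Fin n → ℝ)) (hU : IsOpen U)
    (b : (Fin n → ℝ) → ℝ) (hb : ContDiff ℝ (⊤ : ℕ∞) b)
    (heik : ∀ x ∈ U, ∑ k, (pd b k x) ^ 2 = 1) :
    ∀ J : ℕ, ∀ x ∈ U,
      normalIter b J x
        = (-1 : ℝ) ^ J * (Nat.factorial J : ℝ) * Matrix.trace (hess b x ^ (J + 1)) := by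
  have hb3 : ContDiff ℝ 3 b := hb.of_le (by norm_cast)
  intro J
  induction J with
  | zero => simp [normalIter]
  | succ J ih =>
    intro x hx
    have hev : normalIter b J =ᶠ[𝓝 x]
        fun y => (-1) ^ J * J.factorial * (hess b y ^ (J + 1)).trace :=
      Filter.eventually_of_mem (hU.mem_nhds hx) ih
    calc normalIter b (J + 1) x = fderiv ℝ (normalIter b J) x (grad b x) :=
          sum_pd_mul_eq_fderiv _ _ _
      _ = (-1) ^ J * J.factorial *
            fderiv ℝ (fun y => (hess b y ^ (J + 1)).trace) x (grad b x) := by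
          rw [hev.fderiv_eq, fderiv_const_mul (differentiableAt_trace_hess_pow hb3 _)]
          rfl
      _ = (-1) ^ (J + 1) * (J + 1).factorial * (hess b x ^ (J + 1 + 1)).trace := by
          rw [fderiv_trace_hess_pow_grad hb3 (Filter.eventually_of_mem (hU.mem_nhds hx) heik),
            Nat.factorial_succ]
          push_cast
          ring

/-- If `b` is smooth and satisfies the eikonal identity `‖∇b‖ = 1` on an open set,
then all iterated normal derivatives of the mean curvature satisfy
`∂_ν^J κ = (-1)^J · J! · tr(H^{J+1})`. -/
theorem iterated_normal_deriv_mean_curvature {n : ℕ} (hn : 1 ≤ n)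
    (U : Set (Fin n → ℝ)) (hU : IsOpen U)
    (b : (Fin n → ℝ) → ℝ) (hb : ContDiff ℝ (⊤ : ℕ∞) b)
    (heik : ∀ x ∈ U, ∑ k, (pd b k x) ^ 2 = 1) :
    ∀ J : ℕ, ∀ x ∈ U,
      normalIter b J x
        = (-1 : ℝ) ^ J * (Nat.factorial J : ℝ) * Matrix.trace (hess b x ^ (J + 1)) :=
  iterated_normal_deriv_mean_curvature_general U hU b hb heik
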